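/- Let X be a 0-dimensional space. If the group C_p(X,ℝ) is Pontryagin reflexive, then the group C_p(X,ℤ) is Pontryagin reflexive. -/

import Mathlib

open TopologicalSpace
open scoped Classical

/-- The circle group `𝕋 = ℝ/ℤ`. -/
abbrev Circ : Type := AddCircle (1 : ℝ)

/-- `C_p(X,ℤ)`: the group of continuous functions `X → ℤ` (with `ℤ` discrete) under
pointwise addition, equipped with the topology of pointwise convergence (the subspace
topology from the product `ℤ^X`). -/
def CpZ (X : Type*) [TopologicalSpace X] : Type _ := C(X, ℤ)

noncomputable instance (X : Type*) [TopologicalSpace X] : FunLike (CpZ X) X ℤ :=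
  inferInstanceAs (FunLike C(X, ℤ) X ℤ)

noncomputable instance (X : Type*) [TopologicalSpace X] : AddCommGroup (CpZ X) :=
  inferInstanceAs (AddCommGroup C(X, ℤ))

noncomputable instance (X : Type*) [TopologicalSpace X] : TopologicalSpace (CpZ X) :=
  TopologicalSpace.induced (fun f : CpZ X => (f : X → ℤ)) Pi.topologicalSpace

/-- `C_p(X,ℝ)`: the group of continuous real-valued functions on `X` under pointwise
addition, equipped with the topology of pointwise convergence. -/
def CpR (X : Type*) [TopologicalSpace X] : Type _ := C(X, ℝ)

noncomputable instance (X : Type*) [TopologicalSpace X] : FunLike (CpR X) X ℝ :=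
  inferInstanceAs (FunLike C(X, ℝ) X ℝ)

noncomputable instance (X : Type*) [TopologicalSpace X] : AddCommGroup (CpR X) :=
  inferInstanceAs (AddCommGroup C(X, ℝ))

noncomputable instance (X : Type*) [TopologicalSpace X] : TopologicalSpace (CpR X) :=
  TopologicalSpace.induced (fun f : CpR X => (f : X → ℝ)) Pi.topologicalSpace

/-- A topological abelian group `G` is Pontryagin reflexive if the evaluation map
`ℰ : G → (Ĝ)^`, `ℰ g χ = χ g`, is a topological group isomorphism onto the dual of the
dual group `Ĝ` (both duals consisting of the continuous characters into `𝕋 = ℝ/ℤ` and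
carrying the compact-open topology). -/
def PontryaginReflexive (G : Type*) [AddCommGroup G] [TopologicalSpace G] : Prop :=
  ∃ E : G → ContinuousAddMonoidHom (ContinuousAddMonoidHom G Circ) Circ,
    (∀ (g : G) (χ : ContinuousAddMonoidHom G Circ), E g χ = χ g) ∧
    (∀ g₁ g₂ : G, E (g₁ + g₂) = E g₁ + E g₂) ∧
    Function.Bijective E ∧ Continuous E ∧ IsOpenMap E

/-! ### Arithmetic lemmas on the circle -/

lemma circ_smul_coe (n : ℤ) (a : ℝ) : n • ((a : ℝ) : Circ) = ((n * a : ℝ) : Circ) := by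
  rw [← zsmul_eq_mul]
  exact (QuotientAddGroup.mk_zsmul _ a n).symm

lemma circ_norm_coe (a : ℝ) : ‖((a : ℝ) : Circ)‖ = |a - round a| := by
  rw [AddCircle.norm_eq]; norm_num

lemma circ_norm_coe_of_small {a : ℝ} (h : |a| < 2⁻¹) : ‖((a : ℝ) : Circ)‖ = |a| := by
  rw [circ_norm_coe]
  have : round a = 0 := by
    rw [round_eq_zero_iff]
    constructor
    · linarith [abs_lt.1 h |>.1]
    · have := (abs_lt.1 h).2; simpa using by linarith
  simp [this]

lemma circ_eq_zero_of_small_multiples {t : Circ} (h : ∀ n : ℤ, ‖n • t‖ < 4⁻¹) : t = 0 := by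
  obtain ⟨a₀, rfl⟩ := QuotientAddGroup.mk_surjective t
  set a : ℝ := a₀ - round a₀ with ha
  have hcoe : ((a : ℝ) : Circ) = (a₀ : Circ) := by
    have h2 : ((round a₀ : ℝ) : Circ) = 0 := by
      rw [AddCircle.coe_eq_zero_iff]; exact ⟨round a₀, by simp⟩
    have h3 := congrArg (fun z => (a₀ : Circ) - z) h2
    simpa [ha, AddCircle.coe_sub] using h3.symm
  have hnorm : ‖(a₀ : Circ)‖ = |a| := by rw [circ_norm_coe]
  have h1 : |a| < 4⁻¹ := by
    have := h 1
    rwa [one_smul, hnorm] at this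
  rcases eq_or_ne a 0 with h0 | h0
  · rw [← hcoe, h0]; norm_num
  · exfalso
    have hapos : 0 < |a| := abs_pos.2 h0
    set n : ℤ := ⌈(4 * |a|)⁻¹⌉ with hn
    have hn1 : (1 : ℤ) ≤ n := by
      rw [hn]
      exact Int.one_le_ceil_iff.2 (by positivity)
    have hge : (4 : ℝ)⁻¹ ≤ (n : ℝ) * |a| := by
      have := Int.le_ceil ((4 * |a|)⁻¹)
      have h4 : (4 * |a|)⁻¹ * |a| ≤ (n:ℝ) * |a| := by
        apply mul_le_mul_of_nonneg_right _ (abs_nonneg a)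
        exact_mod_cast this
      calc (4:ℝ)⁻¹ = (4 * |a|)⁻¹ * |a| := by field_simp
        _ ≤ (n:ℝ) * |a| := h4
    have hlt : (n : ℝ) * |a| < 2⁻¹ := by
      have := Int.ceil_lt_add_one ((4 * |a|)⁻¹)
      have h5 : ((n:ℝ) - 1) * |a| < (4*|a|)⁻¹ * |a| := by
        apply mul_lt_mul_of_pos_right _ hapos
        push_cast at this ⊢; linarith
      have h6 : (4*|a|)⁻¹ * |a| = 4⁻¹ := by field_simp
      nlinarith [hapos, h1]
    have hcontr := h n
    rw [← hcoe, circ_smul_coe] at hcontr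
    have habs : |(n:ℝ) * a| < 2⁻¹ := by
      rw [abs_mul]
      have hnn : (0:ℝ) ≤ (n:ℝ) := by exact_mod_cast (by linarith : (0:ℤ) ≤ n)
      rw [abs_of_nonneg hnn]; exact hlt
    rw [circ_norm_coe_of_small habs] at hcontr
    have hfin : (4:ℝ)⁻¹ ≤ |(n:ℝ) * a| := by
      rw [abs_mul]
      have hnn : (0:ℝ) ≤ (n:ℝ) := by exact_mod_cast (by linarith : (0:ℤ) ≤ n)
      rw [abs_of_nonneg hnn]; exact hge
    linarith

lemma circ_exists_multiple {t : Circ} (ht : t ≠ 0) : ∃ n : ℤ, 4⁻¹ ≤ ‖n • t‖ := by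
  by_contra hc
  push_neg at hc
  exact ht (circ_eq_zero_of_small_multiples (fun n => hc n))

lemma circ_exists_smul_ge (m : ℤ) (hm : m ≠ 0) : ∃ c : Circ, 4⁻¹ ≤ ‖m • c‖ := by
  refine ⟨((2 * (m:ℝ))⁻¹ : ℝ), ?_⟩
  rw [circ_smul_coe]
  have hm' : (m : ℝ) ≠ 0 := Int.cast_ne_zero.2 hm
  have h1 : (m : ℝ) * (2 * (m:ℝ))⁻¹ = 2⁻¹ := by field_simp
  rw [h1]
  have h2 : ‖((2⁻¹ : ℝ) : Circ)‖ = 2⁻¹ := by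
    rw [circ_norm_coe]
    have : round (2⁻¹ : ℝ) = 1 := by
      rw [round_eq]; norm_num
    rw [this]; norm_num
  rw [h2]; norm_num

lemma circ_intCast_eq_zero (n : ℤ) : (((n : ℝ) : ℝ) : Circ) = 0 := by
  rw [AddCircle.coe_eq_zero_iff]
  exact ⟨n, by simp⟩

/-! ### Basics on `CpZ X` -/

section Basics
variable {X : Type*} [TopologicalSpace X]

/-- Evaluation at a point as an additive homomorphism. -/
noncomputable def evZ (x : X) : CpZ X →+ ℤ where
  toFun f := f x
  map_zero' := rfl
  map_add' _ _ := rfl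

lemma evZ_apply (x : X) (f : CpZ X) : evZ x f = f x := rfl

lemma continuous_evZ (x : X) : Continuous fun f : CpZ X => f x :=
  (continuous_apply x).comp continuous_induced_dom

lemma cpz_smul_apply (n : ℤ) (f : CpZ X) (x : X) : (n • f) x = n • (f x) := by
  have := map_zsmul (evZ x) n f
  simpa [evZ_apply] using this

lemma cpz_sub_apply (f g : CpZ X) (x : X) : (f - g) x = f x - g x := by
  have := map_sub (evZ x) f g
  simpa [evZ_apply] using this

lemma cpz_sum_apply {ι : Type*} (s : Finset ι) (f : ι → CpZ X) (x : X) :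
    (∑ i ∈ s, f i) x = ∑ i ∈ s, (f i) x :=
  map_sum (evZ x) f s

/-- Indicator function of a clopen set, as a continuous map. -/
noncomputable def indCM (U : Set X) (hU : IsClopen U) : C(X, ℤ) :=
  ⟨fun y => if y ∈ U then 1 else 0, by
    apply IsLocallyConstant.continuous
    intro s
    by_cases h1 : (1 : ℤ) ∈ s <;> by_cases h0 : (0 : ℤ) ∈ s
    · convert isOpen_univ
      ext y; by_cases hy : y ∈ U <;> simp [hy, h1, h0]
    · convert hU.2
      ext y; by_cases hy : y ∈ U <;> simp [hy, h1, h0]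
    · convert hU.compl.2
      ext y; by_cases hy : y ∈ U <;> simp [hy, h1, h0]
    · convert isOpen_empty
      ext y; by_cases hy : y ∈ U <;> simp [hy, h1, h0]⟩

/-- Indicator function of a clopen set, as an element of `CpZ X` (junk value `0` if the
set is not clopen). -/
noncomputable def ind (U : Set X) : CpZ X :=
  if hU : IsClopen U then (indCM U hU : C(X, ℤ)) else 0

lemma ind_apply {U : Set X} (hU : IsClopen U) (y : X) :
    ind U y = if y ∈ U then 1 else 0 := by
  have : ind U = (indCM U hU : CpZ X) := dif_pos hU
  rw [this]; rfl

variable [T2Space X]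

lemma clopen_sep (h0 : IsTopologicalBasis {s : Set X | IsClopen s}) {a b : X} (hab : a ≠ b) :
    ∃ U : Set X, IsClopen U ∧ a ∈ U ∧ b ∉ U := by
  obtain ⟨u, v, hu, hv, hau, hbv, huv⟩ := t2_separation hab
  obtain ⟨U, hU, haU, hUu⟩ := h0.exists_subset_of_mem_open hau hu
  exact ⟨U, hU, haU, fun hbU => Set.disjoint_left.1 huv (hUu hbU) hbv⟩

lemma clopen_isolating (h0 : IsTopologicalBasis {s : Set X | IsClopen s}) (x : X)
    (F : Finset X) :
    ∃ U : Set X, IsClopen U ∧ x ∈ U ∧ ∀ y ∈ F, y ∈ U → y = x := by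
  classical
  refine Finset.induction_on F ⟨Set.univ, isClopen_univ, trivial, by simp⟩ ?_
  rintro a F ha ⟨U, hU, hxU, hUF⟩
  rcases eq_or_ne a x with rfl | hax
  · refine ⟨U, hU, hxU, ?_⟩
    intro y hy hyU
    rcases Finset.mem_insert.1 hy with rfl | hy
    · rfl
    · exact hUF y hy hyU
  · obtain ⟨V, hV, hxV, haV⟩ := clopen_sep h0 hax.symm
    refine ⟨U ∩ V, hU.inter hV, ⟨hxU, hxV⟩, ?_⟩
    intro y hy hyUV
    rcases Finset.mem_insert.1 hy with rfl | hy
    · exact absurd hyUV.2 haV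
    · exact hUF y hy hyUV.1

end Basics

/-! ### The dual group of `CpZ X` -/

/-- The dual group of `CpZ X`. -/
abbrev HdZ (X : Type*) [TopologicalSpace X] := ContinuousAddMonoidHom (CpZ X) Circ

/-- The bidual group of `CpZ X`. -/
abbrev HddZ (X : Type*) [TopologicalSpace X] := ContinuousAddMonoidHom (HdZ X) Circ

section Dual
variable {X : Type*} [TopologicalSpace X]

/-- `χ` is supported in the finite set `F`. -/
def SuppIn (χ : HdZ X) (F : Finset X) : Prop :=
  ∀ f : CpZ X, (∀ x ∈ F, f x = 0) → χ f = 0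

lemma SuppIn.mono {χ : HdZ X} {F F' : Finset X} (h : SuppIn χ F) (hFF' : F ⊆ F') :
    SuppIn χ F' :=
  fun f hf => h f (fun x hx => hf x (hFF' hx))

lemma exists_suppIn (χ : HdZ X) : ∃ F : Finset X, SuppIn χ F := by
  have hcont : ContinuousAt χ (0 : CpZ X) := (map_continuous χ).continuousAt
  have hball : {t : Circ | ‖t‖ < 4⁻¹} ∈ nhds (χ 0) := by
    rw [map_zero]
    have : {t : Circ | ‖t‖ < 4⁻¹} = Metric.ball 0 4⁻¹ := by
      ext t; simp [mem_ball_zero_iff]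
    rw [this]
    exact Metric.ball_mem_nhds _ (by norm_num)
  have hpre : χ ⁻¹' {t : Circ | ‖t‖ < 4⁻¹} ∈ nhds (0 : CpZ X) := hcont hball
  rw [nhds_induced, Filter.mem_comap] at hpre
  obtain ⟨S, hS, hsub⟩ := hpre
  rw [nhds_pi, Filter.mem_pi] at hS
  obtain ⟨I, hIfin, V, hV, hVsub⟩ := hS
  refine ⟨hIfin.toFinset, ?_⟩
  have key : ∀ g : CpZ X, (∀ x ∈ hIfin.toFinset, g x = 0) → ‖χ g‖ < 4⁻¹ := by
    intro g hg
    apply hsub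
    apply hVsub
    intro x hx
    have h0 : (0 : ℤ) ∈ V x := by
      have := hV x
      rwa [nhds_discrete, Filter.mem_pure] at this
    have : g x = 0 := hg x (hIfin.mem_toFinset.2 hx)
    show (g : X → ℤ) x ∈ V x
    rw [this]; exact h0
  intro f hf
  apply circ_eq_zero_of_small_multiples
  intro n
  rw [← map_zsmul]
  exact key _ (fun x hx => by rw [cpz_smul_apply, hf x hx, smul_zero])

lemma suppIn_congr {χ : HdZ X} {F : Finset X} (h : SuppIn χ F) {f g : CpZ X}
    (hfg : ∀ x ∈ F, f x = g x) : χ f = χ g := by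
  have := h (f - g) (fun x hx => by
    rw [cpz_sub_apply, hfg x hx, sub_self])
  rwa [map_sub, sub_eq_zero] at this

lemma suppIn_decomp {χ : HdZ X} {F : Finset X} (h : SuppIn χ F) (U : X → Set X)
    (hU : ∀ x ∈ F, IsClopen (U x) ∧ x ∈ U x ∧ ∀ y ∈ F, y ∈ U x → y = x) (f : CpZ X) :
    χ f = ∑ x ∈ F, f x • χ (ind (U x)) := by
  have h1 : χ f = χ (∑ x ∈ F, f x • ind (U x)) := by
    apply suppIn_congr h
    intro y hy
    rw [cpz_sum_apply]
    rw [Finset.sum_eq_single y]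
    · rw [cpz_smul_apply, ind_apply (hU y hy).1, if_pos (hU y hy).2.1, smul_eq_mul, mul_one]
    · intro x hx hxy
      rw [cpz_smul_apply, ind_apply (hU x hx).1]
      rw [if_neg, smul_zero]
      intro hyUx
      exact hxy ((hU x hx).2.2 y hy hyUx).symm
    · intro hyF
      exact absurd hy hyF
  rw [h1, map_sum]
  congr 1
  ext x
  rw [map_zsmul]

lemma continuous_zsmul_prod : Continuous fun q : ℤ × Circ => q.1 • q.2 := by
  rw [continuous_iff_continuousAt]
  rintro ⟨n, c⟩
  unfold ContinuousAt
  have h : nhds (n, c) = pure n ×ˢ nhds c := by rw [nhds_prod_eq, nhds_discrete]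
  rw [h, Filter.pure_prod, Filter.tendsto_map'_iff]
  exact (continuous_zsmul n).tendsto c

/-- The character `f ↦ f x • c` of `CpZ X`. -/
noncomputable def evChar (x : X) (c : Circ) : HdZ X where
  toFun f := f x • c
  map_zero' := by show ((0 : CpZ X) x) • c = 0; show (0 : ℤ) • c = 0; simp
  map_add' f g := by
    show ((f + g) x) • c = f x • c + g x • c
    show ((f x + g x : ℤ)) • c = f x • c + g x • c
    rw [add_zsmul]
  continuous_toFun :=
    continuous_zsmul_prod.comp (((continuous_evZ x).prodMk continuous_const))

lemma evChar_apply (x : X) (c : Circ) (f : CpZ X) : evChar x c f = f x • c := rfl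

lemma continuous_evChar (x : X) : Continuous fun c : Circ => evChar x c := by
  apply ContinuousAddMonoidHom.continuous_of_continuous_uncurry
  have : (Function.uncurry fun (c : Circ) (f : CpZ X) => evChar x c f)
      = (fun q : ℤ × Circ => q.1 • q.2) ∘ (fun p : Circ × CpZ X => (p.2 x, p.1)) := rfl
  rw [this]
  exact continuous_zsmul_prod.comp (((continuous_evZ x).comp continuous_snd).prodMk
    continuous_fst)

lemma isCompact_evCharSet (F : Finset X) :
    IsCompact (⋃ x ∈ F, Set.range (fun c : Circ => evChar x c)) := by
  apply F.isCompact_biUnion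
  intro x _
  exact isCompact_range (continuous_evChar x)

lemma isOpen_mapsToSet {G : Type*} [AddGroup G] [TopologicalSpace G]
    {K : Set G} (hK : IsCompact K) {A : Set Circ} (hA : IsOpen A) :
    IsOpen {χ : ContinuousAddMonoidHom G Circ | ∀ u ∈ K, χ u ∈ A} := by
  have h := (ContinuousMap.isOpen_setOf_mapsTo hK hA).preimage
    (ContinuousAddMonoidHom.isInducing_toContinuousMap G Circ).continuous
  convert h using 1
  rfl

end Dual

/-! ### Compact sets of characters have common finite support -/

section CommonSupport
variable {X : Type*} [TopologicalSpace X] [T2Space X]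

lemma common_support (h0 : IsTopologicalBasis {s : Set X | IsClopen s})
    {Q : Set (HdZ X)} (hQ : IsCompact Q) :
    ∃ F : Finset X, ∀ χ ∈ Q, SuppIn χ F := by
  by_contra hcon
  push_neg at hcon
  -- Phase 1 : extract a sequence of characters with fresh support points
  have p1 : ∀ S : Finset X, ∃ (χ : HdZ X) (x : X) (V : Set X) (F : Finset X),
      χ ∈ Q ∧ IsClopen V ∧ x ∈ V ∧ x ∉ S ∧ x ∈ F ∧ SuppIn χ F ∧
      (∀ y ∈ F, y ∈ V → y = x) ∧ χ (ind V) ≠ 0 ∧ S ⊆ F := by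
    intro S
    obtain ⟨χ, hχQ, hns⟩ := hcon S
    rw [SuppIn] at hns; push_neg at hns
    obtain ⟨f, hfS, hfne⟩ := hns
    obtain ⟨F₀, hF₀⟩ := exists_suppIn χ
    have hsupp : SuppIn χ (F₀ ∪ S) := hF₀.mono Finset.subset_union_left
    have hiso := fun x => clopen_isolating h0 x (F₀ ∪ S)
    choose U hU1 hU2 hU3 using hiso
    have hdec := suppIn_decomp hsupp U (fun x _ => ⟨hU1 x, hU2 x, hU3 x⟩) f
    rw [hdec] at hfne
    obtain ⟨x, hxF, hxne⟩ := Finset.exists_ne_zero_of_sum_ne_zero hfne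
    have hfx : f x ≠ 0 := by
      intro h; rw [h, zero_smul] at hxne; exact hxne rfl
    have hxS : x ∉ S := fun hxS => hfx (hfS x hxS)
    have hchi : χ (ind (U x)) ≠ 0 := fun h => hxne (by rw [h, smul_zero])
    exact ⟨χ, x, U x, F₀ ∪ S, hχQ, hU1 x, hU2 x, hxS, hxF, hsupp, hU3 x, hchi,
      Finset.subset_union_right⟩
  choose χf xf Vf Ff hQm hVcl hxV hxS hxF hsupp hiso hne hSF using p1
  -- the sequence of accumulated supports
  set Sseq : ℕ → Finset X := fun n => (Ff^[n]) ∅ with hSseq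
  have hSsucc : ∀ n, Sseq (n + 1) = Ff (Sseq n) := by
    intro n
    simp only [hSseq, Function.iterate_succ_apply']
  have hSmono : ∀ m n, m ≤ n → Sseq m ⊆ Sseq n := by
    intro m n hmn
    induction n with
    | zero => rw [Nat.le_zero.1 hmn]
    | succ n ih =>
      rcases Nat.lt_or_ge m (n+1) with h | h
      · refine (ih (Nat.lt_succ_iff.1 h)).trans ?_
        rw [hSsucc n]; exact hSF (Sseq n)
      · rw [Nat.le_antisymm hmn h]
  set χs : ℕ → HdZ X := fun n => χf (Sseq n)
  set xs : ℕ → X := fun n => xf (Sseq n)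
  set Vs : ℕ → Set X := fun n => Vf (Sseq n)
  have hxmem : ∀ n, xs n ∈ Sseq (n+1) := by
    intro n
    rw [hSsucc n]
    exact hxF (Sseq n)
  have hxs_ne : ∀ {m n : ℕ}, m < n → xs m ≠ xs n := by
    intro m n hmn h
    have h1 : xs m ∈ Sseq n := hSmono (m+1) n hmn (hxmem m)
    rw [h] at h1
    exact hxS (Sseq n) h1
  -- Phase 2 : disjointification
  set Inv : Set ℕ × Set X → Prop :=
    fun p => p.1.Infinite ∧ IsClopen p.2 ∧ ∀ j ∈ p.1, xs j ∈ p.2 with hInv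
  set StepOK : Set ℕ × Set X → ℕ × Set X → Set ℕ × Set X → Prop := fun p a r =>
    a.1 ∈ p.1 ∧ IsClopen a.2 ∧ a.2 ⊆ p.2 ∧ a.2 ⊆ Vs a.1 ∧ xs a.1 ∈ a.2 ∧
    r.1 = {j ∈ p.1 | xs j ∉ a.2} ∧ r.2 = p.2 ∩ a.2ᶜ with hStepOK
  have p2 : ∀ p : Set ℕ × Set X, Inv p →
      ∃ q : (ℕ × Set X) × (Set ℕ × Set X), StepOK p q.1 q.2 ∧ Inv q.2 := by
    rintro ⟨I, C⟩ ⟨hIinf, hCcl, hIC⟩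
    obtain ⟨i₁, hi₁, i₂, hi₂, hne12⟩ := hIinf.nontrivial
    have hxne12 : xs i₁ ≠ xs i₂ := by
      rcases Nat.lt_trichotomy i₁ i₂ with h | h | h
      · exact hxs_ne h
      · exact absurd h hne12
      · exact (hxs_ne h).symm
    obtain ⟨A, hAcl, hA1, hA2⟩ := clopen_sep h0 hxne12
    by_cases hc : {j ∈ I | xs j ∉ A ∩ C ∩ Vs i₁}.Infinite
    · refine ⟨((i₁, A ∩ C ∩ Vs i₁), ({j ∈ I | xs j ∉ A ∩ C ∩ Vs i₁}, C ∩ (A ∩ C ∩ Vs i₁)ᶜ)),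
        ⟨hi₁, (hAcl.inter hCcl).inter (hVcl _), ?_, ?_, ?_, rfl, rfl⟩, hc, hCcl.inter
        ((hAcl.inter hCcl).inter (hVcl _)).compl, ?_⟩
      · intro y hy; exact hy.1.2
      · intro y hy; exact hy.2
      · exact ⟨⟨hA1, hIC i₁ hi₁⟩, hxV _⟩
      · rintro j ⟨hjI, hjW⟩
        exact ⟨hIC j hjI, hjW⟩
    · have hfin : {j ∈ I | xs j ∉ A ∩ C ∩ Vs i₁}.Finite := Set.not_infinite.1 hc
      have hsub : {j ∈ I | xs j ∈ A} ⊆ {j ∈ I | xs j ∉ Aᶜ ∩ C ∩ Vs i₂} := by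
        rintro j ⟨hjI, hjA⟩
        exact ⟨hjI, fun hmem => hmem.1.1 hjA⟩
      have hsub2 : I \ {j ∈ I | xs j ∉ A ∩ C ∩ Vs i₁} ⊆ {j ∈ I | xs j ∈ A} := by
        rintro j ⟨hjI, hj2⟩
        refine ⟨hjI, ?_⟩
        by_contra hjA
        exact hj2 ⟨hjI, fun hmem => hjA hmem.1.1⟩
      have hinf2 : {j ∈ I | xs j ∉ Aᶜ ∩ C ∩ Vs i₂}.Infinite :=
        ((hIinf.diff hfin).mono hsub2).mono hsub
      refine ⟨((i₂, Aᶜ ∩ C ∩ Vs i₂), ({j ∈ I | xs j ∉ Aᶜ ∩ C ∩ Vs i₂},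
          C ∩ (Aᶜ ∩ C ∩ Vs i₂)ᶜ)),
        ⟨hi₂, (hAcl.compl.inter hCcl).inter (hVcl _), ?_, ?_, ?_, rfl, rfl⟩, hinf2,
        hCcl.inter ((hAcl.compl.inter hCcl).inter (hVcl _)).compl, ?_⟩
      · intro y hy; exact hy.1.2
      · intro y hy; exact hy.2
      · exact ⟨⟨hA2, hIC i₂ hi₂⟩, hxV _⟩
      · rintro j ⟨hjI, hjW⟩
        exact ⟨hIC j hjI, hjW⟩
  -- iterate phase 2
  set F2 : {p : Set ℕ × Set X // Inv p} → (ℕ × Set X) × {p : Set ℕ × Set X // Inv p} :=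
    fun s => ((Classical.choose (p2 s.1 s.2)).1,
      ⟨(Classical.choose (p2 s.1 s.2)).2, (Classical.choose_spec (p2 s.1 s.2)).2⟩) with hF2
  have inv0 : Inv (Set.univ, Set.univ) :=
    ⟨Set.infinite_univ, isClopen_univ, fun _ _ => trivial⟩
  set st : ℕ → {p : Set ℕ × Set X // Inv p} :=
    fun k => ((fun s => (F2 s).2)^[k]) ⟨(Set.univ, Set.univ), inv0⟩ with hst
  set pk : ℕ → ℕ × Set X := fun k => (F2 (st k)).1 with hpk
  have hstep : ∀ k, StepOK (st k).1 (pk k) (st (k+1)).1 := by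
    intro k
    have hit : st (k+1) = (F2 (st k)).2 := by
      simp only [hst, Function.iterate_succ_apply']
    rw [hit]
    exact (Classical.choose_spec (p2 (st k).1 (st k).2)).1
  set is : ℕ → ℕ := fun k => (pk k).1
  set Ws : ℕ → Set X := fun k => (pk k).2
  have hWcl : ∀ k, IsClopen (Ws k) := fun k => (hstep k).2.1
  have hWV : ∀ k, Ws k ⊆ Vs (is k) := fun k => (hstep k).2.2.2.1
  have hxW : ∀ k, xs (is k) ∈ Ws k := fun k => (hstep k).2.2.2.2.1
  have hCanti : ∀ k, (st (k+1)).1.2 ⊆ (st k).1.2 := by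
    intro k
    rw [(hstep k).2.2.2.2.2.2]
    exact Set.inter_subset_left
  have hCchain : ∀ k l, k ≤ l → (st l).1.2 ⊆ (st k).1.2 := by
    intro k l hkl
    induction l with
    | zero => rw [Nat.le_zero.1 hkl]
    | succ l ih =>
      rcases Nat.lt_or_ge k (l+1) with h | h
      · exact (hCanti l).trans (ih (Nat.lt_succ_iff.1 h))
      · rw [Nat.le_antisymm hkl h]
  have hWdisj : ∀ k l, k < l → ∀ y, y ∈ Ws k → y ∈ Ws l → False := by
    intro k l hkl y hyk hyl
    have h1 : Ws l ⊆ (st l).1.2 := (hstep l).2.2.1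
    have h2 : (st l).1.2 ⊆ (st (k+1)).1.2 := hCchain (k+1) l hkl
    have h3 : (st (k+1)).1.2 = (st k).1.2 ∩ (Ws k)ᶜ := (hstep k).2.2.2.2.2.2
    have := h2 (h1 hyl)
    rw [h3] at this
    exact this.2 hyk
  have hWsub : ∀ y : X, {k | y ∈ Ws k}.Subsingleton := by
    intro y k hk l hl
    by_contra hne'
    rcases Nat.lt_or_ge k l with h | h
    · exact hWdisj k l h y hk hl
    · exact hWdisj l k (Nat.lt_of_le_of_ne h (Ne.symm hne')) y hl hk
  -- the values of the characters on the indicator functions of the `Ws`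
  have hshrink : ∀ k, χs (is k) (ind (Ws k)) = χs (is k) (ind (Vs (is k))) := by
    intro k
    apply suppIn_congr (hsupp (Sseq (is k)))
    intro y hy
    rw [ind_apply (hWcl k), ind_apply (hVcl (Sseq (is k)))]
    by_cases hyW : y ∈ Ws k
    · rw [if_pos hyW, if_pos (hWV k hyW)]
    · rw [if_neg hyW]
      by_cases hyV : y ∈ Vs (is k)
      · exact absurd (hiso (Sseq (is k)) y hy hyV ▸ hxW k) hyW
      · rw [if_neg hyV]
  have hts : ∀ k, χs (is k) (ind (Ws k)) ≠ 0 := by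
    intro k
    rw [hshrink k]
    exact hne (Sseq (is k))
  have hms : ∀ k, ∃ m : ℤ, 4⁻¹ ≤ ‖m • χs (is k) (ind (Ws k))‖ :=
    fun k => circ_exists_multiple (hts k)
  choose ms hms' using hms
  set fs : ℕ → CpZ X := fun k => ms k • ind (Ws k) with hfs
  have hfsval : ∀ k, χs (is k) (fs k) = ms k • χs (is k) (ind (Ws k)) := by
    intro k
    rw [hfs]
    exact map_zsmul (χs (is k)) (ms k) (ind (Ws k))
  have hfs0 : ∀ k y, y ∉ Ws k → fs k y = 0 := by
    intro k y hy
    rw [hfs]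
    show (ms k • ind (Ws k)) y = 0
    rw [cpz_smul_apply, ind_apply (hWcl k), if_neg hy, smul_zero]
  have hfstendsto : Filter.Tendsto fs Filter.atTop (nhds (0 : CpZ X)) := by
    rw [nhds_induced, Filter.tendsto_comap_iff]
    rw [tendsto_pi_nhds]
    intro y
    have hev : ∀ᶠ k in Filter.atTop, fs k y = 0 := by
      by_cases hy : ∃ k₀, y ∈ Ws k₀
      · obtain ⟨k₀, hk₀⟩ := hy
        filter_upwards [Filter.eventually_gt_atTop k₀] with k hk
        apply hfs0
        intro hyk
        exact hWdisj k₀ k hk y hk₀ hyk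
      · push_neg at hy
        exact Filter.Eventually.of_forall (fun k => hfs0 k y (hy k))
    have : Filter.Tendsto (fun _ : ℕ => (0 : ℤ)) Filter.atTop (nhds 0) :=
      tendsto_const_nhds
    exact this.congr' (hev.mono fun k h => h.symm)
  -- the cluster point
  have hlep : Filter.map (fun k => χs (is k)) Filter.atTop ≤ Filter.principal Q := by
    rw [Filter.le_principal_iff, Filter.mem_map]
    exact Filter.Eventually.of_forall (fun k => hQm (Sseq (is k)))
  obtain ⟨χst, hχstQ, hclust⟩ := hQ.exists_clusterPt hlep
  obtain ⟨Fst, hFst⟩ := exists_suppIn χst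
  have hEfin : {k | (Ws k ∩ (Fst : Set X)).Nonempty}.Finite := by
    have hsub : {k | (Ws k ∩ (Fst : Set X)).Nonempty} ⊆
        ⋃ y ∈ (Fst : Set X), {k | y ∈ Ws k} := by
      rintro k ⟨y, hyW, hyF⟩
      exact Set.mem_biUnion hyF hyW
    exact Set.Finite.subset (Set.Finite.biUnion Fst.finite_toSet
      (fun y _ => (hWsub y).finite)) hsub
  obtain ⟨J, hJ⟩ := hEfin.bddAbove
  have hJ' : ∀ k, J + 1 ≤ k → Ws k ∩ (Fst : Set X) = ∅ := by
    intro k hk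
    by_contra hne'
    have : k ∈ {k | (Ws k ∩ (Fst : Set X)).Nonempty} :=
      Set.nonempty_iff_ne_empty.2 hne'
    have := hJ this
    omega
  set K : Set (CpZ X) := insert 0 (Set.range fun i => fs (i + (J + 1))) with hK
  have hKcomp : IsCompact K :=
    (hfstendsto.comp (Filter.tendsto_add_atTop_nat (J + 1))).isCompact_insert_range
  set A : Set Circ := {t | ‖t‖ < 4⁻¹} with hA
  have hAopen : IsOpen A := isOpen_lt continuous_norm continuous_const
  set O : Set (HdZ X) := {χ | ∀ u ∈ K, χ u ∈ A} with hO
  have hOopen : IsOpen O := isOpen_mapsToSet hKcomp hAopen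
  have hχstO : χst ∈ O := by
    intro u hu
    rcases Set.mem_insert_iff.1 hu with rfl | ⟨i, rfl⟩
    · rw [map_zero]
      show ‖(0 : Circ)‖ < 4⁻¹
      rw [norm_zero]; norm_num
    · have hval : χst (fs (i + (J + 1))) = 0 := by
        apply hFst
        intro y hy
        apply hfs0
        intro hyW
        have : y ∈ Ws (i + (J + 1)) ∩ (Fst : Set X) := ⟨hyW, by exact_mod_cast hy⟩
        rw [hJ' (i + (J + 1)) (by omega)] at this
        exact this
      rw [hval]
      show ‖(0 : Circ)‖ < 4⁻¹
      rw [norm_zero]; norm_num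
  -- extract a contradiction from the cluster point
  have hmem2 : ((fun k => χs (is k)) '' Set.Ici (J + 1)) ∈
      Filter.map (fun k => χs (is k)) Filter.atTop := by
    rw [Filter.mem_map]
    apply Filter.mem_of_superset (Filter.mem_atTop (J + 1))
    intro k hk
    exact Set.mem_image_of_mem _ hk
  obtain ⟨ψ, hψO, hψim⟩ := clusterPt_iff_nonempty.1 hclust (hOopen.mem_nhds hχstO) hmem2
  obtain ⟨k, hkIci, hψeq⟩ := hψim
  have hkK : fs k ∈ K := by
    rw [hK]
    apply Set.mem_insert_of_mem
    refine ⟨k - (J + 1), ?_⟩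
    have h' : k - (J + 1) + (J + 1) = k := Nat.sub_add_cancel hkIci
    show fs (k - (J + 1) + (J + 1)) = fs k
    rw [h']
  have hfin := hψO (fs k) hkK
  rw [← hψeq] at hfin
  have : ‖χs (is k) (fs k)‖ < 4⁻¹ := hfin
  rw [hfsval k] at this
  linarith [hms' k]

end CommonSupport

/-! ### Relation with `CpR X` -/

section Ext
variable {X : Type*} [TopologicalSpace X]

lemma cpr_ext {f g : CpR X} (h : ∀ x, f x = g x) : f = g := by
  have : (f : C(X, ℝ)) = (g : C(X, ℝ)) := ContinuousMap.ext h
  exact this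

lemma cpz_ext {f g : CpZ X} (h : ∀ x, f x = g x) : f = g := by
  have : (f : C(X, ℤ)) = (g : C(X, ℤ)) := ContinuousMap.ext h
  exact this

lemma continuous_evR (x : X) : Continuous fun g : CpR X => g x :=
  (continuous_apply x).comp continuous_induced_dom

lemma cpr_add_apply (f g : CpR X) (x : X) : (f + g) x = f x + g x := rfl

lemma cpr_zero_apply (x : X) : (0 : CpR X) x = 0 := rfl

/-- The natural inclusion of `CpZ X` in `CpR X`. -/
noncomputable def iota : ContinuousAddMonoidHom (CpZ X) (CpR X) where
  toFun f := (⟨fun x => ((f x : ℤ) : ℝ),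
    (continuous_of_discreteTopology : Continuous (fun n : ℤ => (n : ℝ))).comp
      (show C(X, ℤ) from f).continuous⟩ : C(X, ℝ))
  map_zero' := cpr_ext fun x => by
    show ((((0 : CpZ X) x : ℤ)) : ℝ) = (0 : CpR X) x
    rw [cpr_zero_apply]
    norm_num
    rfl
  map_add' f g := cpr_ext fun x => by
    show (((f + g) x : ℤ) : ℝ) = _
    show _ = ((f x : ℤ) : ℝ) + ((g x : ℤ) : ℝ)
    show (((f x + g x : ℤ)) : ℝ) = ((f x : ℤ) : ℝ) + ((g x : ℤ) : ℝ)
    push_cast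
    ring
  continuous_toFun := by
    apply continuous_induced_rng.2
    apply continuous_pi
    intro x
    exact (continuous_of_discreteTopology : Continuous (fun n : ℤ => (n : ℝ))).comp
      (continuous_evZ x)

lemma iota_apply (f : CpZ X) (x : X) : iota f x = ((f x : ℤ) : ℝ) := rfl

/-- The restriction map from the dual of `CpR X` to the dual of `CpZ X`. -/
noncomputable def rho : ContinuousAddMonoidHom (ContinuousAddMonoidHom (CpR X) Circ) (HdZ X) :=
  ContinuousAddMonoidHom.compLeft Circ iota

lemma rho_apply (χ : ContinuousAddMonoidHom (CpR X) Circ) (f : CpZ X) :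
    rho χ f = χ (iota f) := rfl

/-- The character `g ↦ g x mod 1` of `CpR X`. -/
noncomputable def xiChar (x : X) : ContinuousAddMonoidHom (CpR X) Circ where
  toFun g := ((g x : ℝ) : Circ)
  map_zero' := rfl
  map_add' g h := by
    show (((g + h) x : ℝ) : Circ) = ((g x : ℝ) : Circ) + ((h x : ℝ) : Circ)
    rw [cpr_add_apply, AddCircle.coe_add]
  continuous_toFun := (AddCircle.continuous_mk' 1).comp (continuous_evR x)

lemma xiChar_apply (x : X) (g : CpR X) : xiChar x g = ((g x : ℝ) : Circ) := rfl

lemma rho_xiChar (x : X) : rho (xiChar x) = 0 := by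
  ext f
  show xiChar x (iota f) = 0
  rw [xiChar_apply, iota_apply]
  exact circ_intCast_eq_zero (f x)

variable [T2Space X]

/-- Every character of `CpZ X` extends to a character of `CpR X`. -/
lemma exists_extension (h0 : IsTopologicalBasis {s : Set X | IsClopen s}) (χ : HdZ X) :
    ∃ χ' : ContinuousAddMonoidHom (CpR X) Circ, ∀ f : CpZ X, χ' (iota f) = χ f := by
  obtain ⟨F, hF⟩ := exists_suppIn χ
  choose U hU1 hU2 hU3 using fun x => clopen_isolating h0 x F
  choose s hs using fun x => QuotientAddGroup.mk_surjective (χ (ind (U x)))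
  refine ⟨{ toFun := fun g => ((∑ x ∈ F, s x * g x : ℝ) : Circ)
            map_zero' := ?_
            map_add' := ?_
            continuous_toFun := ?_ }, ?_⟩
  · show ((∑ x ∈ F, s x * (0 : CpR X) x : ℝ) : Circ) = 0
    have : (∑ x ∈ F, s x * (0 : CpR X) x) = 0 := by
      apply Finset.sum_eq_zero
      intro x _
      rw [cpr_zero_apply, mul_zero]
    rw [this]; rfl
  · intro g h
    show ((∑ x ∈ F, s x * (g + h) x : ℝ) : Circ) = _
    have : (∑ x ∈ F, s x * (g + h) x) = (∑ x ∈ F, s x * g x) + ∑ x ∈ F, s x * h x := by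
      rw [← Finset.sum_add_distrib]
      apply Finset.sum_congr rfl
      intro x _
      rw [cpr_add_apply, mul_add]
    rw [this, AddCircle.coe_add]
  · apply (AddCircle.continuous_mk' 1).comp
    apply continuous_finset_sum
    intro x _
    exact continuous_const.mul (continuous_evR x)
  · intro f
    show ((∑ x ∈ F, s x * iota f x : ℝ) : Circ) = χ f
    have h1 : ((∑ x ∈ F, s x * iota f x : ℝ) : Circ)
        = ∑ x ∈ F, ((s x * iota f x : ℝ) : Circ) := by
      exact map_sum (QuotientAddGroup.mk' (AddSubgroup.zmultiples (1:ℝ)))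
        (fun x => s x * iota f x) F
    rw [h1]
    have h2 : ∀ x ∈ F, ((s x * iota f x : ℝ) : Circ) = f x • χ (ind (U x)) := by
      intro x _
      rw [iota_apply, ← hs x, circ_smul_coe]
      congr 1
      ring
    rw [Finset.sum_congr rfl h2]
    exact (suppIn_decomp hF U (fun x _ => ⟨hU1 x, hU2 x, hU3 x⟩) f).symm

end Ext

/-! ### Cylinder neighbourhoods in `CpZ X` -/

lemma exists_cylinder {X : Type*} [TopologicalSpace X] {Uo : Set (CpZ X)} (hUo : IsOpen Uo)
    {f₀ : CpZ X} (hf₀ : f₀ ∈ Uo) :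
    ∃ F : Finset X, ∀ f : CpZ X, (∀ x ∈ F, f x = f₀ x) → f ∈ Uo := by
  have hmem : Uo ∈ nhds f₀ := hUo.mem_nhds hf₀
  rw [nhds_induced, Filter.mem_comap] at hmem
  obtain ⟨S, hS, hsub⟩ := hmem
  rw [nhds_pi, Filter.mem_pi] at hS
  obtain ⟨I, hIfin, V, hV, hVsub⟩ := hS
  refine ⟨hIfin.toFinset, fun f hf => ?_⟩
  apply hsub
  apply hVsub
  intro x hx
  have h0 : f₀ x ∈ V x := by
    have := hV x
    rwa [nhds_discrete, Filter.mem_pure] at this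
  show (f : X → ℤ) x ∈ V x
  rw [hf x (hIfin.mem_toFinset.2 hx)]
  exact h0

/-- For a `0`-dimensional space `X`, if `C_p(X,ℝ)` is Pontryagin reflexive then so is
`C_p(X,ℤ)`. -/
theorem stmt19 (X : Type*) [TopologicalSpace X] [T2Space X]
    (h0 : IsTopologicalBasis {s : Set X | IsClopen s})
    (hR : PontryaginReflexive (CpR X)) : PontryaginReflexive (CpZ X) := by
  classical
  obtain ⟨ER, hER1, _hER2, hERbij, _hERcont, _hERopen⟩ := hR
  set E : CpZ X → HddZ X := fun f =>
    { toFun := fun χ => χ f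
      map_zero' := rfl
      map_add' := fun χ₁ χ₂ => rfl
      continuous_toFun := continuous_eval_const f } with hE
  have hE1 : ∀ (g : CpZ X) (χ : HdZ X), E g χ = χ g := fun g χ => rfl
  -- injectivity
  have hinj : Function.Injective E := by
    intro f g hfg
    by_contra hne
    have hx : ∃ x, f x ≠ g x := by
      by_contra h; push_neg at h; exact hne (cpz_ext h)
    obtain ⟨x, hx⟩ := hx
    have hm : f x - g x ≠ 0 := sub_ne_zero.2 hx
    obtain ⟨c, hc⟩ := circ_exists_smul_ge _ hm
    have h1 : E f (evChar x c) = E g (evChar x c) := by rw [hfg]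
    have h2 : f x • c = g x • c := h1
    have h3 : (f x - g x) • c = 0 := by rw [sub_zsmul, h2]; abel
    rw [h3, norm_zero] at hc
    norm_num at hc
  -- surjectivity
  have hsurj : Function.Surjective E := by
    intro ψ
    set Ψ : ContinuousAddMonoidHom (ContinuousAddMonoidHom (CpR X) Circ) Circ :=
      ψ.comp rho with hΨ
    obtain ⟨g, hg⟩ := hERbij.2 Ψ
    have hgZ : ∀ x, ∃ n : ℤ, ((n : ℤ) : ℝ) = g x := by
      intro x
      have h1 : Ψ (xiChar x) = 0 := by
        show ψ (rho (xiChar x)) = 0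
        rw [rho_xiChar, map_zero]
      have h2 : ((g x : ℝ) : Circ) = 0 := by
        rw [← xiChar_apply, ← hER1 g (xiChar x), hg, h1]
      rw [AddCircle.coe_eq_zero_iff] at h2
      obtain ⟨n, hn⟩ := h2
      refine ⟨n, ?_⟩
      rw [← hn, zsmul_eq_mul, mul_one]
    choose nz hnz using hgZ
    have hnzcont : Continuous nz := by
      apply IsLocallyConstant.continuous
      rw [IsLocallyConstant.iff_eventually_eq]
      intro x
      have hgc : Continuous (fun y => g y) := (show C(X, ℝ) from g).continuous
      have hb : {y | |g y - g x| < 1} ∈ nhds x := by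
        have hc1 : Continuous fun y => g y - g x := hgc.sub continuous_const
        have hop : IsOpen {y | |g y - g x| < 1} :=
          isOpen_lt (continuous_abs.comp hc1) continuous_const
        apply hop.mem_nhds
        simp
      filter_upwards [hb] with y hy
      have hcast : ((nz y - nz x : ℤ) : ℝ) = g y - g x := by
        push_cast
        rw [hnz y, hnz x]
      have habs : |((nz y - nz x : ℤ) : ℝ)| < 1 := by rw [hcast]; exact hy
      have habs' : |nz y - nz x| < 1 := by exact_mod_cast habs
      have := abs_lt.1 habs'
      omega
    set h : CpZ X := ((⟨nz, hnzcont⟩ : C(X, ℤ)) : CpZ X) with hh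
    have hih : iota h = g := cpr_ext fun x => by
      rw [iota_apply]
      exact hnz x
    refine ⟨h, ?_⟩
    ext χ
    show χ h = ψ χ
    obtain ⟨χ', hχ'⟩ := exists_extension h0 χ
    have hrho : rho χ' = χ := by
      ext f
      rw [rho_apply]
      exact hχ' f
    calc χ h = χ' (iota h) := (hχ' h).symm
      _ = χ' g := by rw [hih]
      _ = ER g χ' := (hER1 g χ').symm
      _ = Ψ χ' := by rw [hg]
      _ = ψ (rho χ') := rfl
      _ = ψ χ := by rw [hrho]
  -- continuity
  have hcont : Continuous E := by
    apply continuous_induced_rng.2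
    rw [ContinuousMap.continuous_compactOpen]
    intro K hK U hU
    obtain ⟨F, hF⟩ := common_support h0 hK
    set S : Set (CpZ X) := {f | Set.MapsTo (⇑((E f).toContinuousMap)) K U} with hS
    have hSeq : S = ⋃ f₀ ∈ S, {f : CpZ X | ∀ x ∈ F, f x = f₀ x} := by
      apply Set.Subset.antisymm
      · intro f hf
        exact Set.mem_biUnion hf (fun x _ => rfl)
      · intro f hf
        obtain ⟨f₀, hf₀S, hff₀⟩ := Set.mem_iUnion₂.1 hf
        intro χ hχ
        have : χ f = χ f₀ := suppIn_congr (hF χ hχ) hff₀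
        show χ f ∈ U
        rw [this]
        exact hf₀S hχ
    show IsOpen S
    rw [hSeq]
    apply isOpen_biUnion
    intro f₀ _
    have : {f : CpZ X | ∀ x ∈ F, f x = f₀ x} = ⋂ x ∈ F, (fun f : CpZ X => f x) ⁻¹' {f₀ x} := by
      ext f; simp
    rw [this]
    apply isOpen_biInter_finset
    intro x _
    exact (isOpen_discrete {f₀ x}).preimage (continuous_evZ x)
  -- openness
  have hopen : IsOpenMap E := by
    intro Uo hUo
    rw [isOpen_iff_forall_mem_open]
    rintro ψ₀ ⟨f₀, hf₀U, rfl⟩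
    obtain ⟨F, hcyl⟩ := exists_cylinder hUo hf₀U
    set QF : Set (HdZ X) := ⋃ x ∈ F, Set.range (fun c : Circ => evChar x c) with hQF
    set A : Set Circ := {t | ‖t‖ < 4⁻¹} with hA
    have hAopen : IsOpen A := isOpen_lt continuous_norm continuous_const
    set O' : Set (HddZ X) := {ψ | ∀ χ ∈ QF, ψ χ ∈ A} with hO'
    have hO'open : IsOpen O' := isOpen_mapsToSet (isCompact_evCharSet F) hAopen
    refine ⟨(fun ψ' => E f₀ + ψ') '' O', ?_, ?_, ?_⟩
    · rintro ψ ⟨ψ', hψ', rfl⟩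
      obtain ⟨g', hg'⟩ := hsurj (E f₀ + ψ')
      have hψ'val : ∀ x ∈ F, ∀ c : Circ, ψ' (evChar x c) = (g' x - f₀ x) • c := by
        intro x hx c
        have h1 : E g' (evChar x c) = E f₀ (evChar x c) + ψ' (evChar x c) := by
          rw [hg']; rfl
        have h2 : g' x • c = f₀ x • c + ψ' (evChar x c) := h1
        rw [sub_zsmul]
        rw [h2]
        abel
      have hgf : ∀ x ∈ F, g' x = f₀ x := by
        intro x hx
        by_contra hne
        have hm : g' x - f₀ x ≠ 0 := sub_ne_zero.2 hne
        obtain ⟨c, hc⟩ := circ_exists_smul_ge _ hm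
        have hmem : evChar x c ∈ QF := Set.mem_biUnion hx (Set.mem_range_self c)
        have := hψ' (evChar x c) hmem
        rw [hψ'val x hx c] at this
        have : ‖(g' x - f₀ x) • c‖ < 4⁻¹ := this
        linarith
      have hgU : g' ∈ Uo := hcyl g' hgf
      exact ⟨g', hgU, hg'⟩
    · exact (Homeomorph.addLeft (E f₀)).isOpenMap _ hO'open
    · refine ⟨0, ?_, add_zero _⟩
      intro χ _
      show ((0 : HddZ X) χ) ∈ A
      show ‖(0 : HddZ X) χ‖ < 4⁻¹
      have : (0 : HddZ X) χ = 0 := rfl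
      rw [this, norm_zero]
      norm_num
  exact ⟨E, hE1, fun g₁ g₂ => by ext χ; exact map_add χ g₁ g₂, ⟨hinj, hsurj⟩, hcont, hopen⟩
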